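/- Let v be a vertex of a finite directed multigraph G and suppose there exist d ∈ ℕ and constants 0 < c₁ ≤ c₂ with c₁·n^d ≤ |Path_G(v,n)| ≤ c₂·n^d for all sufficiently large n. Then d equals the largest k ∈ ℕ for which there exist pairwise vertex-disjoint simple cycles C₀, C₁, …, C_k with v ≥ C₀ ≥ C₁ ≥ ⋯ ≥ C_k. -/

import Mathlib

open Filter Topology

variable {V E : Type*}

/-- A nonempty list of edges forms a directed path:
the target of each edge is the source of the next. -/
def IsDiPath (src tgt : E → V) (l : List E) : Prop :=
  l ≠ [] ∧ l.Chain' (fun e f => tgt e = src f)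

/-- The path `l` starts at the vertex `v` (the source of its first edge is `v`). -/
def StartsAt (src : E → V) (l : List E) (v : V) : Prop :=
  l.head?.map src = some v

/-- The path `l` ends at the vertex `w` (the target of its last edge is `w`). -/
def EndsAt (tgt : E → V) (l : List E) (w : V) : Prop :=
  l.getLast?.map tgt = some w

/-- `l` is a closed path: a path such that the target of the last edge
equals the source of the first edge. -/
def IsClosedDiPath (src tgt : E → V) (l : List E) : Prop :=
  IsDiPath src tgt l ∧ ∃ v : V, StartsAt src l v ∧ EndsAt tgt l v

/-- `l` is a simple cycle: a closed path whose edge sources are pairwise distinct. -/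
def IsSimpleCycle (src tgt : E → V) (l : List E) : Prop :=
  IsClosedDiPath src tgt l ∧ (l.map src).Nodup

/-- The vertex `v` lies on the cycle `l`, i.e. it is the source of one of its edges. -/
def OnCycle (src : E → V) (l : List E) (v : V) : Prop :=
  v ∈ l.map src

/-- Two simple cycles are distinct if neither is a cyclic rotation of the other;
the graph has no intersecting cycles if any two distinct simple cycles are
vertex-disjoint. -/
def NoIntersectingCycles (src tgt : E → V) : Prop :=
  ∀ l l' : List E, IsSimpleCycle src tgt l → IsSimpleCycle src tgt l' →
    ¬ l.IsRotated l' → ∀ v : V, ¬ (OnCycle src l v ∧ OnCycle src l' v)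

/-- `v ≥ w`: either `v = w` or there is a directed path from `v` to `w`. -/
def Reaches (src tgt : E → V) (v w : V) : Prop :=
  v = w ∨ ∃ l : List E, IsDiPath src tgt l ∧ StartsAt src l v ∧ EndsAt tgt l w

/-- `v` and `w` are mutually reachable. -/
def MutReach (src tgt : E → V) (v w : V) : Prop :=
  Reaches src tgt v w ∧ Reaches src tgt w v

/-- The number of directed paths of length `n` in the graph starting at `v`. -/
noncomputable def pathCount (src tgt : E → V) (v : V) (n : ℕ) : ℕ :=
  Nat.card {l : List E // l.length = n ∧ IsDiPath src tgt l ∧ StartsAt src l v}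

/-- An infinite path in the graph. -/
def IsInfPath (src tgt : E → V) (p : ℕ → E) : Prop :=
  ∀ n : ℕ, tgt (p n) = src (p (n + 1))

/-- The vertex `v` is visited infinitely often by the infinite path `p`. -/
def VisitedInfOften (src : E → V) (p : ℕ → E) (v : V) : Prop :=
  ∀ N : ℕ, ∃ n ≥ N, src (p n) = v

/-- `v ≥ C`: the vertex `v` reaches some vertex on the cycle `C`. -/
def ReachesCycle (src tgt : E → V) (v : V) (l : List E) : Prop :=
  ∃ w : V, OnCycle src l w ∧ Reaches src tgt v w

/-- `C ≥ C'`: some vertex on the cycle `C` reaches the cycle `C'`. -/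
def CycleReachesCycle (src tgt : E → V) (l l' : List E) : Prop :=
  ∃ v : V, OnCycle src l v ∧ ReachesCycle src tgt v l'

/-- Two cycles are vertex-disjoint. -/
def CyclesDisjoint (src : E → V) (l l' : List E) : Prop :=
  ∀ v : V, ¬ (OnCycle src l v ∧ OnCycle src l' v)

/-- The vertex `v` lies on two distinct simple cycles. -/
def OnTwoCycles (src tgt : E → V) (v : V) : Prop :=
  ∃ l l' : List E, IsSimpleCycle src tgt l ∧ IsSimpleCycle src tgt l' ∧
    ¬ l.IsRotated l' ∧ OnCycle src l v ∧ OnCycle src l' v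

/-- The adjacency matrix of the graph, as a real matrix: the `(a, b)` entry is the
number of edges from `a` to `b`. -/
noncomputable def adjMatrix (src tgt : E → V) : Matrix V V ℝ :=
  Matrix.of fun a b => (Nat.card {e : E // src e = a ∧ tgt e = b} : ℝ)


/-!
A polynomial bound on the number of walks from `v` rules out two distinct simple cycles `x`, `y`
through a vertex `u` reachable from `v`: the closed walks `x ++ y` and `y ++ x` at `u` are distinct
of equal length, and their free concatenations give `2 ^ m` walks of length `O(m)`.
A chain `C₀ ≥ ⋯ ≥ C_k` of disjoint simple cycles reachable from `v` gives `(n + 1) ^ (k + 1)` walks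
of length `O(n)`, winding `cᵢ ≤ n` times around each `Cᵢ`; they are told apart by the number of
visits to a vertex of each `Cᵢ`.
Conversely, when every reachable vertex lies on at most one simple cycle, each walk from `v` is a
skeleton through distinct vertices with turns around the cycle at some of them spliced in, and the
cycles that are used form a chain. So there are at most `A (n + 1) ^ (K + 1)` walks of length at
most `n`, where `K` is the length of the longest chain.
Counting walks of length at most `n`, which grow like `n ^ (d + 1)`, the three estimates give
`d = K`.
-/

namespace PathGrowth

/-! ### Polynomial and exponential growth -/

section Asymptotics

open Asymptotics Finset

theorem le_of_isBigO_natCast_pow {a b : ℕ}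
    (h : (fun n : ℕ => (n : ℝ) ^ a) =O[atTop] fun n => (n : ℝ) ^ b) : a ≤ b := by
  by_contra! hba
  refine isLittleO_irrefl ?_ (h.trans_isLittleO
    ((isLittleO_pow_pow_atTop_of_lt hba).comp_tendsto tendsto_natCast_atTop_atTop))
  exact (eventually_ge_atTop 1).frequently.mono fun n hn => by positivity

theorem not_isBigO_two_pow (e : ℕ) :
    ¬(fun n : ℕ => (2 : ℝ) ^ n) =O[atTop] fun n => (n : ℝ) ^ e := fun h =>
  isLittleO_irrefl (Frequently.of_forall fun n => by positivity)
    (h.trans_isLittleO (isLittleO_pow_const_const_pow_of_one_lt e one_lt_two))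

theorem _root_.Asymptotics.IsBigO.comp_affine {f : ℕ → ℝ} {e : ℕ}
    (hf : f =O[atTop] fun n => (n : ℝ) ^ e) (s : ℕ) {B : ℕ} (hB : 0 < B) :
    (fun n => f (s + B * n)) =O[atTop] fun n => (n : ℝ) ^ e := by
  have ht : Tendsto (fun n => s + B * n) atTop atTop :=
    tendsto_atTop_mono (fun n => by dsimp only [id]; nlinarith) tendsto_id
  refine (hf.comp_tendsto ht).trans (IsBigO.of_bound (((s : ℝ) + B) ^ e) ?_)
  filter_upwards [eventually_ge_atTop 1] with n hn
  have hn : (1 : ℝ) ≤ n := by exact_mod_cast hn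
  simp only [Function.comp_apply, norm_pow, Real.norm_natCast, ← mul_pow]
  gcongr
  push_cast
  nlinarith

theorem _root_.Asymptotics.IsBigO.sum_range_pow {f : ℕ → ℝ} {d : ℕ}
    (hf : f =O[atTop] fun n => (n : ℝ) ^ d) :
    (fun n => ∑ i ∈ range n, f i) =O[atTop] fun n => (n : ℝ) ^ (d + 1) := by
  obtain ⟨c, hc, hbound⟩ := hf.exists_pos
  obtain ⟨N, hN⟩ := eventually_atTop.1 hbound.bound
  set P := ∑ i ∈ range N, ‖f i‖
  refine IsBigO.of_bound (P + c) ?_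
  filter_upwards [eventually_ge_atTop (max N 1)] with n hn
  have hn1 : (1 : ℝ) ≤ n := by exact_mod_cast le_of_max_le_right hn
  have hP : 0 ≤ P := sum_nonneg fun _ _ => norm_nonneg _
  calc ‖∑ i ∈ range n, f i‖
      ≤ ∑ i ∈ range n, ‖f i‖ := norm_sum_le _ _
    _ = P + ∑ i ∈ Ico N n, ‖f i‖ := (sum_range_add_sum_Ico _ (le_of_max_le_left hn)).symm
    _ ≤ P + ∑ _i ∈ Ico N n, c * (n : ℝ) ^ d := by
        gcongr with i hi
        refine (hN i (mem_Ico.1 hi).1).trans ?_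
        simp only [norm_pow, Real.norm_natCast]
        gcongr
        exact (mem_Ico.1 hi).2.le
    _ ≤ P * (n : ℝ) ^ (d + 1) + c * (n : ℝ) ^ (d + 1) := by
        have hnN : ((n - N : ℕ) : ℝ) ≤ n := by exact_mod_cast Nat.sub_le n N
        have h₁ : P ≤ P * (n : ℝ) ^ (d + 1) := le_mul_of_one_le_right hP (one_le_pow₀ hn1)
        have h₂ := mul_le_mul_of_nonneg_right hnN (by positivity : (0 : ℝ) ≤ c * (n : ℝ) ^ d)
        rw [sum_const, Nat.card_Ico, nsmul_eq_mul]
        linarith [show (n : ℝ) * (c * (n : ℝ) ^ d) = c * (n : ℝ) ^ (d + 1) by ring]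
    _ = (P + c) * ‖(n : ℝ) ^ (d + 1)‖ := by simp [add_mul]

theorem _root_.Asymptotics.IsBigO.pow_succ_sum_range {f : ℕ → ℝ} {d : ℕ}
    (hf : (fun n : ℕ => (n : ℝ) ^ d) =O[atTop] f) (hf0 : ∀ n, 0 ≤ f n) :
    (fun n : ℕ => (n : ℝ) ^ (d + 1)) =O[atTop] fun n => ∑ i ∈ range (2 * n), f i := by
  obtain ⟨c, hc, hbound⟩ := hf.exists_pos
  obtain ⟨N, hN⟩ := eventually_atTop.1 hbound.bound
  refine IsBigO.of_bound c ((eventually_ge_atTop N).mono fun n hn => ?_)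
  rw [Real.norm_of_nonneg (sum_nonneg fun i _ => hf0 i), norm_pow, Real.norm_natCast]
  calc (n : ℝ) ^ (d + 1)
      = ∑ _i ∈ Ico n (2 * n), (n : ℝ) ^ d := by
        rw [sum_const, Nat.card_Ico, nsmul_eq_mul, pow_succ, two_mul, Nat.add_sub_cancel]
        ring
    _ ≤ ∑ i ∈ Ico n (2 * n), c * f i := by
        refine sum_le_sum fun i hi => ?_
        have := hN i (hn.trans (mem_Ico.1 hi).1)
        rw [norm_pow, Real.norm_natCast, Real.norm_of_nonneg (hf0 i)] at this
        exact le_trans (by gcongr; exact (mem_Ico.1 hi).1) this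
    _ ≤ c * ∑ i ∈ range (2 * n), f i := by
        rw [← mul_sum]
        exact mul_le_mul_of_nonneg_left (sum_le_sum_of_subset_of_nonneg
          (fun i hi => by simp only [mem_Ico, mem_range] at hi ⊢; omega) fun i _ _ => hf0 i) hc.le

end Asymptotics

open List Asymptotics

variable {src tgt : E → V}

/-! ### Walks -/

variable (src tgt) in
inductive IsWalk : V → V → List E → Prop
  | nil (a : V) : IsWalk a a []
  | cons {e : E} {b : V} {l : List E} : IsWalk (tgt e) b l → IsWalk (src e) b (e :: l)

@[simp] theorem isWalk_nil {a b : V} : IsWalk src tgt a b [] ↔ a = b :=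
  ⟨fun h => by cases h; rfl, fun h => h ▸ .nil a⟩

@[simp] theorem isWalk_cons {a b : V} {e : E} {l : List E} :
    IsWalk src tgt a b (e :: l) ↔ src e = a ∧ IsWalk src tgt (tgt e) b l :=
  ⟨fun h => by cases h; exact ⟨rfl, by assumption⟩, fun ⟨he, h⟩ => he ▸ h.cons⟩

theorem isWalk_append {a c : V} {l l' : List E} :
    IsWalk src tgt a c (l ++ l') ↔ ∃ b, IsWalk src tgt a b l ∧ IsWalk src tgt b c l' := by
  induction l generalizing a with
  | nil => simp
  | cons e l ih => simp [ih, and_assoc]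

theorem IsWalk.append {a b c : V} {l l' : List E} (h : IsWalk src tgt a b l)
    (h' : IsWalk src tgt b c l') : IsWalk src tgt a c (l ++ l') :=
  isWalk_append.2 ⟨b, h, h'⟩

theorem IsWalk.end_unique {a b b' : V} {l : List E} (h : IsWalk src tgt a b l)
    (h' : IsWalk src tgt a b' l) : b = b' := by
  induction h with
  | nil => exact isWalk_nil.1 h'
  | cons _ ih => exact ih (isWalk_cons.1 h').2

theorem IsWalk.flatten {u : V} {L : List (List E)} (h : ∀ x ∈ L, IsWalk src tgt u u x) :
    IsWalk src tgt u u L.flatten := by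
  induction L with
  | nil => exact .nil u
  | cons x L ih =>
    exact (h x mem_cons_self).append (ih fun y hy => h y (mem_cons_of_mem x hy))

theorem IsWalk.flatten_replicate {u : V} {x : List E} (h : IsWalk src tgt u u x) (a : ℕ) :
    IsWalk src tgt u u (replicate a x).flatten :=
  .flatten fun _ hy => (eq_of_mem_replicate hy) ▸ h

theorem IsWalk.flatten_ofFn {n : ℕ} (x : Fin (n + 1) → V) {f : Fin n → List E}
    (h : ∀ i, IsWalk src tgt (x i.castSucc) (x i.succ) (f i)) :
    IsWalk src tgt (x 0) (x (Fin.last n)) (ofFn f).flatten := by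
  induction n with
  | zero => simp
  | succ n ih =>
    rw [ofFn_succ, flatten_cons]
    exact (h 0).append (ih (fun i => x i.succ) fun i => h i.succ)

theorem isDiPath_startsAt_endsAt_iff {a b : V} {l : List E} :
    IsDiPath src tgt l ∧ StartsAt src l a ∧ EndsAt tgt l b ↔ l ≠ [] ∧ IsWalk src tgt a b l := by
  show (l ≠ [] ∧ l.IsChain fun e f => tgt e = src f) ∧ l.head?.map src = some a ∧
    l.getLast?.map tgt = some b ↔ _
  induction l generalizing a with
  | nil => simp
  | cons e l ih =>
    cases l with
    | nil => simp [eq_comm]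
    | cons f l =>
      have := @ih (tgt e)
      simp only [ne_eq, reduceCtorEq, not_false_eq_true, true_and, head?_cons, Option.map_some,
        Option.some.injEq, getLast?_cons_cons, isChain_cons_cons, isWalk_cons] at this ⊢
      rw [← this, eq_comm (a := tgt e)]
      tauto

theorem isDiPath_startsAt_iff {a : V} {l : List E} :
    IsDiPath src tgt l ∧ StartsAt src l a ↔ l ≠ [] ∧ ∃ b, IsWalk src tgt a b l := by
  constructor
  · rintro ⟨hp, hs⟩
    have he : EndsAt tgt l (tgt (l.getLast hp.1)) := by
      rw [EndsAt, getLast?_eq_some_getLast hp.1]; rfl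
    exact ⟨hp.1, _, (isDiPath_startsAt_endsAt_iff.1 ⟨hp, hs, he⟩).2⟩
  · rintro ⟨hne, b, hl⟩
    obtain ⟨hp, hs, -⟩ := isDiPath_startsAt_endsAt_iff.2 ⟨hne, hl⟩
    exact ⟨hp, hs⟩

theorem reaches_iff_exists_isWalk {a b : V} :
    Reaches src tgt a b ↔ ∃ l, IsWalk src tgt a b l := by
  constructor
  · rintro (rfl | ⟨l, h⟩)
    · exact ⟨[], .nil a⟩
    · exact ⟨l, (isDiPath_startsAt_endsAt_iff.1 h).2⟩
  · rintro ⟨_ | ⟨e, l⟩, h⟩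
    · exact .inl (isWalk_nil.1 h)
    · exact .inr ⟨_, isDiPath_startsAt_endsAt_iff.2 ⟨cons_ne_nil e l, h⟩⟩

theorem IsWalk.reaches {a b : V} {l : List E} (h : IsWalk src tgt a b l) : Reaches src tgt a b :=
  reaches_iff_exists_isWalk.2 ⟨l, h⟩

theorem _root_.Reaches.trans {a b c : V} (h : Reaches src tgt a b) (h' : Reaches src tgt b c) :
    Reaches src tgt a c := by
  obtain ⟨l, hl⟩ := reaches_iff_exists_isWalk.1 h
  obtain ⟨l', hl'⟩ := reaches_iff_exists_isWalk.1 h'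
  exact (hl.append hl').reaches

theorem IsWalk.exists_of_mem_map {a b x : V} {l : List E} (h : IsWalk src tgt a b l)
    (hx : x ∈ l.map src) :
    ∃ p e s, l = p ++ e :: s ∧ src e = x ∧ IsWalk src tgt a x p ∧ IsWalk src tgt x b (e :: s) := by
  obtain ⟨e, he, rfl⟩ := mem_map.1 hx
  obtain ⟨p, s, rfl⟩ := append_of_mem he
  obtain ⟨c, hp, hs⟩ := isWalk_append.1 h
  obtain rfl := (isWalk_cons.1 hs).1
  exact ⟨p, e, s, rfl, rfl, hp, hs⟩

theorem IsWalk.reaches_of_mem {a b x : V} {l : List E} (h : IsWalk src tgt a b l)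
    (hx : x ∈ l.map src) : Reaches src tgt a x :=
  let ⟨_, _, _, _, _, hp, _⟩ := h.exists_of_mem_map hx; hp.reaches

theorem IsWalk.reaches_src_of_mem {u : V} {l : List E} (h : IsWalk src tgt u u l) {e : E}
    (he : e ∈ l) : Reaches src tgt u (src e) ∧ Reaches src tgt (tgt e) (src e) := by
  obtain ⟨p, s, rfl⟩ := append_of_mem he
  obtain ⟨b, hp, hes⟩ := isWalk_append.1 h
  obtain ⟨rfl, hs⟩ := isWalk_cons.1 hes
  exact ⟨hp.reaches, (hs.append hp).reaches⟩

theorem IsWalk.exists_last_visit {a b x : V} {l : List E} (h : IsWalk src tgt a b l)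
    (hx : x ∈ l.map src) :
    ∃ p e s, l = p ++ e :: s ∧ src e = x ∧ IsWalk src tgt a x p ∧ IsWalk src tgt (tgt e) b s ∧
      x ∉ s.map src := by
  induction h with
  | nil => simp at hx
  | @cons e _ t ht ih =>
    by_cases hxt : x ∈ t.map src
    · obtain ⟨p, f, s, rfl, hf, hp, hs, hxs⟩ := ih hxt
      exact ⟨e :: p, f, s, rfl, hf, isWalk_cons.2 ⟨rfl, hp⟩, hs, hxs⟩
    · obtain rfl : x = src e := by simpa [hxt] using hx
      exact ⟨[], e, t, rfl, rfl, .nil _, ht, hxt⟩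

theorem IsWalk.exists_loop {a b : V} {l : List E} (h : IsWalk src tgt a b l)
    (hl : ¬((l.map src).Nodup ∧ b ∉ l.map src)) :
    ∃ w p c s, l = p ++ c ++ s ∧ c ≠ [] ∧ IsWalk src tgt a w p ∧ IsWalk src tgt w w c ∧
      IsWalk src tgt w b s := by
  rw [not_and_or, not_not] at hl
  rcases hl with hnd | hb
  · obtain ⟨x, hx⟩ : ∃ x, [x, x] <+ l.map src := by simpa [nodup_iff_sublist] using hnd
    obtain ⟨r₁, r₂, hr, hx₁, hx₂⟩ := cons_sublist_iff.1 hx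
    obtain ⟨l₁, l₂, rfl, rfl, rfl⟩ := map_eq_append_iff.1 hr
    obtain ⟨m, h₁, h₂⟩ := isWalk_append.1 h
    obtain ⟨p, e, s, rfl, -, hp, hes⟩ := h₁.exists_of_mem_map hx₁
    obtain ⟨p', f, s', rfl, -, hp', hfs'⟩ := h₂.exists_of_mem_map (singleton_sublist.1 hx₂)
    exact ⟨x, p, (e :: s) ++ p', f :: s', by simp, by simp, hp, hes.append hp', hfs'⟩
  · obtain ⟨p, e, s, rfl, -, hp, hes⟩ := h.exists_of_mem_map hb
    exact ⟨b, p, e :: s, [], by simp, by simp, hp, hes, .nil b⟩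

theorem IsWalk.exists_nodup {a b : V} {l : List E} (h : IsWalk src tgt a b l) :
    ∃ l', IsWalk src tgt a b l' ∧ (l'.map src).Nodup ∧ b ∉ l'.map src := by
  induction hn : l.length using Nat.strong_induction_on generalizing l with
  | _ n ih =>
  by_cases hl : (l.map src).Nodup ∧ b ∉ l.map src
  · exact ⟨l, h, hl⟩
  obtain ⟨w, p, c, s, rfl, hc, hp, -, hs⟩ := h.exists_loop hl
  exact ih _ (by simp [← hn, length_pos_iff.2 hc]) (hp.append hs) rfl

/-! ### Simple cycles -/

variable (src tgt) in
structure IsCycleAt (u : V) (x : List E) : Prop where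
  ne_nil : x ≠ []
  isWalk : IsWalk src tgt u u x
  nodup : (x.map src).Nodup

theorem isSimpleCycle_iff_exists_isCycleAt {l : List E} :
    IsSimpleCycle src tgt l ↔ ∃ u, IsCycleAt src tgt u l := by
  constructor
  · rintro ⟨⟨hp, u, hs, he⟩, hnd⟩
    obtain ⟨hne, hw⟩ := isDiPath_startsAt_endsAt_iff.1 ⟨hp, hs, he⟩
    exact ⟨u, hne, hw, hnd⟩
  · rintro ⟨u, hne, hw, hnd⟩
    obtain ⟨hp, hs, he⟩ := isDiPath_startsAt_endsAt_iff.2 ⟨hne, hw⟩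
    exact ⟨⟨hp, u, hs, he⟩, hnd⟩

theorem IsCycleAt.mem_map {u : V} {x : List E} (h : IsCycleAt src tgt u x) : u ∈ x.map src := by
  obtain ⟨e, x, rfl⟩ := exists_cons_of_ne_nil h.ne_nil
  simp [(isWalk_cons.1 h.isWalk).1]

theorem IsCycleAt.rotate {u w : V} {x : List E} (h : IsCycleAt src tgt u x)
    (hw : w ∈ x.map src) : ∃ y, IsCycleAt src tgt w y ∧ y ~ x := by
  obtain ⟨p, e, s, rfl, -, hp, hes⟩ := h.isWalk.exists_of_mem_map hw
  exact ⟨(e :: s) ++ p,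
    ⟨by simp, hes.append hp, (perm_append_comm.map src).nodup_iff.1 h.nodup⟩, perm_append_comm⟩

theorem IsCycleAt.eq_of_prefix {u : V} {x l : List E} (hx : IsCycleAt src tgt u x)
    (hl : IsWalk src tgt u u l) (hne : l ≠ []) (h : l <+: x) : l = x := by
  obtain ⟨z, rfl⟩ := h
  obtain ⟨b, hl', hz⟩ := isWalk_append.1 hx.isWalk
  obtain rfl := hl'.end_unique hl
  cases z with
  | nil => simp
  | cons f z =>
    have := hx.nodup
    rw [map_append, nodup_append] at this
    exact absurd rfl (this.2.2 _ (IsCycleAt.mem_map ⟨hne, hl, this.1⟩) _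
      (by simp [(isWalk_cons.1 hz).1]))

theorem exists_isCycleAt_cons {e : E} {l : List E} (h : IsWalk src tgt (tgt e) (src e) l) :
    ∃ p, IsCycleAt src tgt (src e) (e :: p) := by
  obtain ⟨p, hp, hnd, hu⟩ := h.exists_nodup
  exact ⟨p, cons_ne_nil _ _, isWalk_cons.2 ⟨rfl, hp⟩, by simpa [hu] using hnd⟩

theorem _root_.IsSimpleCycle.reaches {C : List E} (hC : IsSimpleCycle src tgt C) {a b : V}
    (ha : a ∈ C.map src) (hb : b ∈ C.map src) : Reaches src tgt a b := by
  obtain ⟨u, hu⟩ := isSimpleCycle_iff_exists_isCycleAt.1 hC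
  obtain ⟨D, hD, hDC⟩ := hu.rotate ha
  exact hD.isWalk.reaches_of_mem ((hDC.map src).symm.subset hb)

theorem _root_.CyclesDisjoint.symm {C C' : List E} (h : CyclesDisjoint src C C') :
    CyclesDisjoint src C' C :=
  fun x hx => h x hx.symm

variable (src tgt) in
def IsCycleChain (v : V) {k : ℕ} (C : Fin (k + 1) → List E) : Prop :=
  (∀ i, IsSimpleCycle src tgt (C i)) ∧ (∀ i j, i ≠ j → CyclesDisjoint src (C i) (C j)) ∧
    ReachesCycle src tgt v (C 0) ∧ ∀ i : Fin k, CycleReachesCycle src tgt (C i.castSucc) (C i.succ)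

theorem exists_isCycleChain_of_pathCount_ne_zero [Fintype V] {v : V} {n : ℕ}
    (hn : Fintype.card V < n) (hpos : pathCount src tgt v n ≠ 0) :
    ∃ C : Fin 1 → List E, IsCycleChain src tgt v C := by
  obtain ⟨⟨l, hln, hl⟩⟩ := (Nat.card_ne_zero.1 hpos).1
  obtain ⟨-, w, hl⟩ := isDiPath_startsAt_iff.1 hl
  have hnd : ¬((l.map src).Nodup ∧ w ∉ l.map src) := fun h => by
    have := h.1.length_le_card
    simp only [length_map] at this
    omega
  obtain ⟨u, p, c, s, -, hc, hp, hcu, -⟩ := hl.exists_loop hnd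
  obtain ⟨e, t, rfl⟩ := exists_cons_of_ne_nil hc
  obtain ⟨rfl, ht⟩ := isWalk_cons.1 hcu
  obtain ⟨q, hq⟩ := exists_isCycleAt_cons ht
  exact ⟨fun _ => e :: q, fun _ => isSimpleCycle_iff_exists_isCycleAt.2 ⟨_, hq⟩,
    fun i j hij => absurd (Fin.ext (by omega)) hij, ⟨_, hq.mem_map, hp.reaches⟩, Fin.elim0⟩

/-! ### Counting walks -/

variable (src tgt) in
noncomputable def walkCount (v : V) (n : ℕ) : ℕ :=
  {l : List E | l.length ≤ n ∧ ∃ w, IsWalk src tgt v w l}.ncard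

theorem pathCount_zero (v : V) : pathCount src tgt v 0 = 0 :=
  Nat.card_eq_zero.2 (.inl ⟨fun ⟨_, hl, hp, _⟩ => hp.1 (length_eq_zero_iff.1 hl)⟩)

theorem pathCount_succ (v : V) (n : ℕ) :
    pathCount src tgt v (n + 1) =
      {l : List E | l.length = n + 1 ∧ ∃ w, IsWalk src tgt v w l}.ncard := by
  rw [pathCount, ← Nat.card_coe_set_eq]
  congr! 3 with l
  refine and_congr_right fun hl => ?_
  rw [isDiPath_startsAt_iff, and_iff_right (ne_nil_of_length_eq_add_one hl)]

theorem finite_setOf_isWalk [Finite E] (v : V) (n : ℕ) :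
    {l : List E | l.length ≤ n ∧ ∃ w, IsWalk src tgt v w l}.Finite :=
  (List.finite_length_le E n).subset fun _ h => h.1

theorem walkCount_eq_one_add_sum [Finite E] (v : V) (n : ℕ) :
    walkCount src tgt v n = 1 + ∑ i ∈ Finset.range (n + 1), pathCount src tgt v i := by
  induction n with
  | zero =>
    have : {l : List E | l.length ≤ 0 ∧ ∃ w, IsWalk src tgt v w l} = {[]} := by
      ext l
      simpa [length_eq_zero_iff] using fun h => h ▸ ⟨v, .nil v⟩
    rw [walkCount, this, Set.ncard_singleton]
    simp [pathCount_zero]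
  | succ n ih =>
    have : {l : List E | l.length ≤ n + 1 ∧ ∃ w, IsWalk src tgt v w l} =
        {l | l.length ≤ n ∧ ∃ w, IsWalk src tgt v w l} ∪
          {l | l.length = n + 1 ∧ ∃ w, IsWalk src tgt v w l} := by
      ext l
      exact (and_congr_left' Nat.le_succ_iff).trans or_and_right
    rw [walkCount, this, Set.ncard_union_eq _ (finite_setOf_isWalk v n)
      ((finite_setOf_isWalk v (n + 1)).subset fun l h => ⟨h.1.le, h.2⟩), Finset.sum_range_succ,
      ← pathCount_succ, ← walkCount, ih, add_assoc]
    exact Set.disjoint_left.2 fun l h h' => by have := h.1; have := h'.1; omega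

theorem isBigO_walkCount_of_isBigO_pathCount [Finite E] {v : V} {d : ℕ}
    (h : (fun n => (pathCount src tgt v n : ℝ)) =O[atTop] fun n => (n : ℝ) ^ d) :
    (fun n => (walkCount src tgt v n : ℝ)) =O[atTop] fun n => (n : ℝ) ^ (d + 1) := by
  have h₁ : (fun _ : ℕ => (1 : ℝ)) =O[atTop] fun n => (n : ℝ) ^ (d + 1) :=
    IsBigO.of_bound 1 <| (eventually_ge_atTop 1).mono fun n hn => by
      simpa using one_le_pow₀ (M₀ := ℝ) (by exact_mod_cast hn)
  have h₂ := h.sum_range_pow.comp_affine 1 one_pos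
  simp only [one_mul, add_comm 1] at h₂
  refine (h₁.add h₂).congr_left fun n => ?_
  simp [walkCount_eq_one_add_sum]

theorem succ_le_of_isBigO_walkCount [Finite E] {v : V} {d e : ℕ}
    (hlow : (fun n : ℕ => (n : ℝ) ^ d) =O[atTop] fun n => (pathCount src tgt v n : ℝ))
    (hw : (fun n => (walkCount src tgt v n : ℝ)) =O[atTop] fun n => (n : ℝ) ^ e) : d + 1 ≤ e := by
  have hsum : (fun n => ∑ i ∈ Finset.range (2 * n), (pathCount src tgt v i : ℝ)) =O[atTop]
      fun n => (walkCount src tgt v (2 * n) : ℝ) :=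
    IsBigO.of_bound 1 <| Eventually.of_forall fun n => by
      rw [walkCount_eq_one_add_sum, Finset.sum_range_succ]
      simp only [Real.norm_natCast,
        Real.norm_of_nonneg (Finset.sum_nonneg fun _ _ => Nat.cast_nonneg _)]
      push_cast
      linarith [(Nat.cast_nonneg _ : (0 : ℝ) ≤ pathCount src tgt v (2 * n))]
  have hw₂ : (fun n => (walkCount src tgt v (2 * n) : ℝ)) =O[atTop] fun n => (n : ℝ) ^ e := by
    simpa using hw.comp_affine 0 two_pos
  exact le_of_isBigO_natCast_pow
    ((hlow.pow_succ_sum_range fun _ => Nat.cast_nonneg _).trans (hsum.trans hw₂))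

theorem card_le_walkCount [Finite E] {v : V} {n : ℕ} {ι : Type*} {f : ι → List E}
    (hf : Function.Injective f) (h : ∀ i, (f i).length ≤ n ∧ ∃ w, IsWalk src tgt v w (f i)) :
    Nat.card ι ≤ walkCount src tgt v n := by
  rw [← Set.ncard_range_of_injective hf]
  exact Set.ncard_le_ncard (Set.range_subset_iff.2 h) (finite_setOf_isWalk v n)

/-! ### Lower bounds from cycles -/

variable (src tgt) in
def UniqueCycles (v : V) : Prop :=
  ∀ u, Reaches src tgt v u → ∀ x y, IsCycleAt src tgt u x → IsCycleAt src tgt u y → x = y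

theorem two_pow_le_walkCount [Finite E] {v u : V} {Q X Y : List E} (hQ : IsWalk src tgt v u Q)
    (hX : IsWalk src tgt u u X) (hY : IsWalk src tgt u u Y) (hXY : X ≠ Y)
    (hlen : X.length = Y.length) (m : ℕ) :
    2 ^ m ≤ walkCount src tgt v (Q.length + X.length * m) := by
  let block (b : Fin m → Bool) : List (List E) := ofFn fun i => if b i then X else Y
  have hblock (b : Fin m → Bool) : (block b).map length = replicate m X.length := by
    rw [map_ofFn, ← ofFn_const]
    congr 1
    funext i
    simp only [Function.comp_apply]
    split <;> simp [hlen]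
  have hinj : Function.Injective fun b => Q ++ (block b).flatten := by
    intro b b' h
    have := ofFn_injective (eq_iff_flatten_eq.2 ⟨append_cancel_left h, by rw [hblock, hblock]⟩)
    funext i
    have h' : (if b i then X else Y) = if b' i then X else Y := congrFun this i
    cases hb : b i <;> cases hb' : b' i <;> simp only [hb, hb'] at h' ⊢ <;>
      first | rfl | exact absurd h' hXY | exact absurd h'.symm hXY
  simpa using card_le_walkCount hinj fun b => ⟨by simp [length_flatten, hblock, mul_comm],
    u, hQ.append (.flatten fun x hx => by
      obtain ⟨i, rfl⟩ := mem_ofFn.1 hx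
      split <;> assumption)⟩

theorem uniqueCycles_of_isBigO [Finite E] {v : V} {e : ℕ}
    (h : (fun n => (walkCount src tgt v n : ℝ)) =O[atTop] fun n => (n : ℝ) ^ e) :
    UniqueCycles src tgt v := by
  intro u hu x y hx hy
  by_contra hxy
  obtain ⟨Q, hQ⟩ := reaches_iff_exists_isWalk.1 hu
  have hne : x ++ y ≠ y ++ x := fun h => hxy <| by
    rcases prefix_or_prefix_of_prefix (h ▸ prefix_append x y) (prefix_append y x) with h' | h'
    · exact hy.eq_of_prefix hx.isWalk hx.ne_nil h'
    · exact (hx.eq_of_prefix hy.isWalk hy.ne_nil h').symm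
  have hexp : (fun m : ℕ => (2 : ℝ) ^ m) =O[atTop]
      fun m => (walkCount src tgt v (Q.length + (x ++ y).length * m) : ℝ) :=
    IsBigO.of_bound 1 <| Eventually.of_forall fun m => by
      simpa using (Nat.cast_le (α := ℝ)).2 <| two_pow_le_walkCount hQ
        (hx.isWalk.append hy.isWalk) (hy.isWalk.append hx.isWalk) hne (by simp [add_comm]) m
  exact not_isBigO_two_pow e
    (hexp.trans (h.comp_affine _ (by simp [length_pos_iff, hx.ne_nil])))

theorem pow_le_walkCount [Finite E] [DecidableEq V] {v : V} {k : ℕ} (x : Fin (k + 2) → V)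
    (hx : x 0 = v) {P R : Fin (k + 1) → List E}
    (hP : ∀ i, IsWalk src tgt (x i.castSucc) (x i.succ) (P i))
    (hR : ∀ i, IsWalk src tgt (x i.succ) (x i.succ) (R i))
    (hcount : ∀ i j, ((R i).map src).count (x j.succ) = if i = j then 1 else 0) (n : ℕ) :
    (n + 1) ^ (k + 1) ≤
      walkCount src tgt v (∑ i, (P i).length + (∑ i, (R i).length) * n) := by
  let F (c : Fin (k + 1) → Fin (n + 1)) : List E :=
    (ofFn fun i => P i ++ (replicate (c i) (R i)).flatten).flatten
  have hF (c j) : ((F c).map src).count (x j.succ) =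
      ∑ i, ((P i).map src).count (x j.succ) + c j := by
    simp only [F, map_flatten, count_flatten, map_ofFn, Function.comp_def, map_append,
      count_append, map_replicate, sum_ofFn, hcount, sum_replicate_nat, mul_ite, mul_one, mul_zero,
      Finset.sum_add_distrib, Finset.sum_ite_eq', Finset.mem_univ, if_true]
  have hinj : Function.Injective F := fun c c' h => funext fun j => by
    have := hF c j
    rw [h, hF c' j] at this
    exact Fin.ext (by omega)
  simpa using card_le_walkCount hinj fun c => ⟨by
    simp only [F, length_flatten, map_ofFn, sum_ofFn, Function.comp_def, length_append,
      map_replicate, sum_replicate_nat, Finset.sum_add_distrib, Finset.sum_mul]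
    refine Nat.add_le_add_left (Finset.sum_le_sum fun i _ => ?_) _
    rw [mul_comm]
    exact Nat.mul_le_mul_left _ (Nat.lt_succ_iff.1 (c i).2),
    _, hx ▸ IsWalk.flatten_ofFn x fun i => (hP i).append ((hR i).flatten_replicate _)⟩

theorem IsCycleChain.exists_walks [DecidableEq V] {v : V} {k : ℕ} {C : Fin (k + 1) → List E}
    (hC : IsCycleChain src tgt v C) :
    ∃ (x : Fin (k + 2) → V) (P R : Fin (k + 1) → List E), x 0 = v ∧
      (∀ i, IsWalk src tgt (x i.castSucc) (x i.succ) (P i)) ∧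
      (∀ i, IsWalk src tgt (x i.succ) (x i.succ) (R i)) ∧
      ∀ i j, ((R i).map src).count (x j.succ) = if i = j then 1 else 0 := by
  obtain ⟨hcyc, hdisj, ⟨w₀, hw₀, hvw₀⟩, hnext⟩ := hC
  choose a ha b hb hab using hnext
  let w : Fin (k + 1) → V := Fin.cases w₀ b
  have hw (i) : w i ∈ (C i).map src := by
    cases i using Fin.cases with
    | zero => exact hw₀
    | succ i => exact hb i
  let x : Fin (k + 2) → V := Fin.cons v w
  have hreach (i : Fin (k + 1)) : Reaches src tgt (x i.castSucc) (x i.succ) := by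
    cases i using Fin.cases with
    | zero => exact hvw₀
    | succ i =>
      rw [← Fin.succ_castSucc]
      exact ((hcyc _).reaches (hw _) (ha i)).trans (hab i)
  choose P hP using fun i => reaches_iff_exists_isWalk.1 (hreach i)
  have hrot (i : Fin (k + 1)) : ∃ R, IsCycleAt src tgt (w i) R ∧ R ~ C i := by
    obtain ⟨u, hu⟩ := isSimpleCycle_iff_exists_isCycleAt.1 (hcyc i)
    exact hu.rotate (hw i)
  choose R hR hRC using hrot
  refine ⟨x, P, R, rfl, hP, fun i => (hR i).isWalk, fun i j => ?_⟩
  change ((R i).map src).count (w j) = _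
  rw [((hRC i).map src).count_eq]
  split_ifs with hij
  · subst hij
    exact count_eq_one_of_mem (((hRC i).map src).nodup_iff.1 (hR i).nodup) (hw i)
  · exact count_eq_zero_of_not_mem fun h => hdisj j i (Ne.symm hij) _ ⟨hw j, h⟩

theorem IsCycleChain.succ_le_of_isBigO [Finite E] {v : V} {k : ℕ} {C : Fin (k + 1) → List E}
    (hC : IsCycleChain src tgt v C) {e : ℕ}
    (h : (fun n => (walkCount src tgt v n : ℝ)) =O[atTop] fun n => (n : ℝ) ^ e) : k + 1 ≤ e := by
  classical
  obtain ⟨x, P, R, hx, hP, hR, hcount⟩ := hC.exists_walks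
  have hB : 0 < ∑ i, (R i).length := by
    refine lt_of_lt_of_le ?_ (Finset.single_le_sum (fun i _ => Nat.zero_le _) (Finset.mem_univ 0))
    refine length_pos_iff.2 fun h0 => ?_
    simpa [h0] using hcount 0 0
  have hpow : (fun n : ℕ => (n : ℝ) ^ (k + 1)) =O[atTop]
      fun n => (walkCount src tgt v (∑ i, (P i).length + (∑ i, (R i).length) * n) : ℝ) :=
    IsBigO.of_bound 1 <| Eventually.of_forall fun n => by
      have := (Nat.cast_le (α := ℝ)).2 (pow_le_walkCount x hx hP hR hcount n)
      simp only [norm_pow, Real.norm_natCast, one_mul]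
      push_cast at this
      exact (pow_le_pow_left₀ (Nat.cast_nonneg n) (by linarith) _).trans this
  exact le_of_isBigO_natCast_pow (hpow.trans (h.comp_affine _ hB))

/-! ### Walks when cycles are unique -/

variable (src tgt) in
open Classical in
noncomputable def cycleAt (u : V) : List E :=
  if h : ∃ x, IsCycleAt src tgt u x then h.choose else []

theorem isCycleAt_cycleAt {u : V} (h : ∃ x, IsCycleAt src tgt u x) :
    IsCycleAt src tgt u (cycleAt src tgt u) := by
  rw [cycleAt, dif_pos h]
  exact h.choose_spec

theorem IsWalk.prefix_or_prefix {P : E → Prop}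
    (hP : ∀ e e', P e → P e' → src e = src e' → e = e') {a b b' : V} {l l' : List E}
    (h : IsWalk src tgt a b l) (h' : IsWalk src tgt a b' l') (hl : ∀ e ∈ l, P e)
    (hl' : ∀ e ∈ l', P e) : l <+: l' ∨ l' <+: l := by
  induction h generalizing l' with
  | nil => exact .inl nil_prefix
  | @cons e _ t _ ih =>
    cases l' with
    | nil => exact .inr nil_prefix
    | cons e' t' =>
      obtain ⟨he', ht'⟩ := isWalk_cons.1 h'
      obtain rfl := hP e e' (hl e mem_cons_self) (hl' e' mem_cons_self) he'.symm
      simpa using ih ht' (fun f hf => hl f (mem_cons_of_mem e hf))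
        (fun f hf => hl' f (mem_cons_of_mem e hf))

section UniqueCycles

variable {v : V} (hUC : UniqueCycles src tgt v)
include hUC

theorem UniqueCycles.eq_of_reaches {e e' : E} (hv : Reaches src tgt v (src e))
    (hsrc : src e = src e') (he : Reaches src tgt (tgt e) (src e))
    (he' : Reaches src tgt (tgt e') (src e')) : e = e' := by
  obtain ⟨l, hl⟩ := reaches_iff_exists_isWalk.1 he
  obtain ⟨l', hl'⟩ := reaches_iff_exists_isWalk.1 he'
  obtain ⟨p, hp⟩ := exists_isCycleAt_cons hl
  obtain ⟨p', hp'⟩ := exists_isCycleAt_cons hl'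
  rw [← hsrc] at hp'
  exact (cons_eq_cons.1 (hUC _ hv _ _ hp hp')).1

/-- Every edge of a closed walk at a reachable vertex leads back to its source, so by
`eq_of_reaches` the walk follows the cycle there deterministically. -/
theorem UniqueCycles.eq_flatten_replicate {u : V} (hu : Reaches src tgt v u) {l : List E}
    (hl : IsWalk src tgt u u l) :
    ∃ a, l = (replicate a (cycleAt src tgt u)).flatten ∧
      (a ≠ 0 → IsCycleAt src tgt u (cycleAt src tgt u)) := by
  induction hn : l.length using Nat.strong_induction_on generalizing l with
  | _ n ih =>
  cases l with
  | nil => exact ⟨0, rfl, fun h => absurd rfl h⟩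
  | cons e t =>
    obtain ⟨rfl, ht⟩ := isWalk_cons.1 hl
    have hc : IsCycleAt src tgt (src e) (cycleAt src tgt (src e)) :=
      let ⟨_, hp⟩ := exists_isCycleAt_cons ht; isCycleAt_cycleAt ⟨_, hp⟩
    have hP {w : V} {x : List E} (hx : IsWalk src tgt w w x) (hw : Reaches src tgt v w) (f : E)
        (hf : f ∈ x) : Reaches src tgt v (src f) ∧ Reaches src tgt (tgt f) (src f) :=
      ⟨hw.trans (hx.reaches_src_of_mem hf).1, (hx.reaches_src_of_mem hf).2⟩
    rcases hl.prefix_or_prefix (fun f f' hf hf' hs => hUC.eq_of_reaches hf.1 hs hf.2 hf'.2)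
      hc.isWalk (hP hl hu) (hP hc.isWalk hu) with h | ⟨r, hr⟩
    · exact ⟨1, by simpa using hc.eq_of_prefix hl (cons_ne_nil e t) h, fun _ => hc⟩
    · obtain ⟨b, hb, hr'⟩ := isWalk_append.1 (hr ▸ hl)
      obtain rfl := hb.end_unique hc.isWalk
      obtain ⟨a, rfl, -⟩ :=
        ih r.length (by simp [← hn, ← hr, length_pos_iff.2 hc.ne_nil]) hr' rfl
      exact ⟨a + 1, by simp [← hr, replicate_succ], fun _ => hc⟩

theorem UniqueCycles.cyclesDisjoint {x y : V} (hx : Reaches src tgt v x)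
    (hcx : IsCycleAt src tgt x (cycleAt src tgt x)) (hcy : IsCycleAt src tgt y (cycleAt src tgt y))
    (hxy : x ∉ (cycleAt src tgt y).map src) :
    CyclesDisjoint src (cycleAt src tgt x) (cycleAt src tgt y) := by
  rintro z ⟨hzx, hzy⟩
  obtain ⟨X, hX, hXx⟩ := hcx.rotate hzx
  obtain ⟨Y, hY, hYy⟩ := hcy.rotate hzy
  obtain rfl := hUC z (hx.trans (hcx.isWalk.reaches_of_mem hzx)) X Y hX hY
  exact hxy ((hYy.map src).subset ((hXx.map src).symm.subset hcx.mem_map))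

end UniqueCycles

variable (src tgt) in
noncomputable def spliceCycles (m : V → ℕ) : List E → List E
  | [] => []
  | e :: skel =>
    (replicate (m (src e)) (cycleAt src tgt (src e))).flatten ++ e :: spliceCycles m skel

theorem sublist_spliceCycles (m : V → ℕ) (skel : List E) :
    skel <+ spliceCycles src tgt m skel := by
  induction skel with
  | nil => exact nil_sublist _
  | cons e skel ih => exact (ih.cons_cons e).trans (sublist_append_right _ _)

theorem infix_spliceCycles {m : V → ℕ} {skel : List E} {x : V} (hx : x ∈ skel.map src) :
    (replicate (m x) (cycleAt src tgt x)).flatten <:+: spliceCycles src tgt m skel := by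
  induction skel with
  | nil => simp at hx
  | cons e skel ih =>
    rw [spliceCycles]
    obtain rfl | hx := mem_cons.1 (map_cons ▸ hx)
    · exact (prefix_append _ _).isInfix
    · exact (infix_cons (ih hx)).trans (suffix_append _ _).isInfix

theorem spliceCycles_congr {m m' : V → ℕ} {skel : List E} (h : ∀ x ∈ skel.map src, m x = m' x) :
    spliceCycles src tgt m skel = spliceCycles src tgt m' skel := by
  induction skel with
  | nil => rfl
  | cons e skel ih =>
    simp only [map_cons, mem_cons, forall_eq_or_imp] at h
    simp only [spliceCycles, h.1, ih h.2]

variable (src tgt) in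
structure IsCycleSplicing (l skel : List E) (m : V → ℕ) : Prop where
  eq : l = spliceCycles src tgt m skel
  nodup : (skel.map src).Nodup
  support : ∀ x, m x ≠ 0 → x ∈ skel.map src ∧ IsCycleAt src tgt x (cycleAt src tgt x)
  pairwise : (skel.map src).Pairwise fun x y =>
    Reaches src tgt x y ∧ (m y ≠ 0 → x ∉ (cycleAt src tgt y).map src)

/-- Split the walk at its last visit to its starting vertex: the closed part is a power of the
cycle there, and the rest, which never returns, is spliced recursively. -/
theorem UniqueCycles.exists_isCycleSplicing {v : V} (hUC : UniqueCycles src tgt v) {u w : V}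
    {l : List E} (hu : Reaches src tgt v u) (hl : IsWalk src tgt u w l) :
    ∃ skel m, IsCycleSplicing src tgt l skel m := by
  classical
  induction hn : l.length using Nat.strong_induction_on generalizing l u with
  | _ n ih =>
  cases l with
  | nil => exact ⟨[], 0, rfl, nodup_nil, by simp, Pairwise.nil⟩
  | cons e₀ t =>
  obtain ⟨q, e, r, hqr, rfl, hq, hr, hur⟩ :=
    hl.exists_last_visit (x := u) (by simp [(isWalk_cons.1 hl).1])
  obtain ⟨a, rfl, ha⟩ := hUC.eq_flatten_replicate hu hq
  have her : IsWalk src tgt (src e) w (e :: r) := isWalk_cons.2 ⟨rfl, hr⟩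
  have hv : Reaches src tgt v (tgt e) :=
    hu.trans (hq.append (isWalk_cons.2 ⟨rfl, .nil (tgt e)⟩)).reaches
  obtain ⟨skel, m, hs⟩ := ih r.length (by simp [← hn, hqr]; omega) hv hr rfl
  have hskel : ∀ y ∈ skel.map src, y ∈ r.map src :=
    fun y hy => ((hs.eq ▸ sublist_spliceCycles m skel).map src).subset hy
  have hm : ∀ y ∈ skel.map src, Function.update m (src e) a y = m y :=
    fun y hy => Function.update_of_ne (by rintro rfl; exact hur (hskel _ hy)) _ _
  refine ⟨e :: skel, Function.update m (src e) a, ⟨?_, ?_, ?_, ?_⟩⟩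
  · rw [hqr, spliceCycles, Function.update_self, spliceCycles_congr hm, ← hs.eq]
  · exact nodup_cons.2 ⟨fun h => hur (hskel _ h), hs.nodup⟩
  · intro y hy
    by_cases hye : y = src e
    · subst hye
      exact ⟨by simp, ha (by simpa using hy)⟩
    · rw [Function.update_of_ne hye] at hy
      obtain ⟨h₁, h₂⟩ := hs.support y hy
      exact ⟨mem_cons_of_mem _ h₁, h₂⟩
  · rw [map_cons, pairwise_cons]
    refine ⟨fun y hy => ⟨her.reaches_of_mem (by simp [hskel y hy]), fun hmy hey => hur ?_⟩,
      hs.pairwise.imp_of_mem fun _ hy h => ⟨h.1, by rw [hm _ hy]; exact h.2⟩⟩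
    rw [hm y hy] at hmy
    rw [hs.eq]
    exact map_subset src (infix_spliceCycles hy).subset (by simpa [hmy] using hey)

/-! ### Upper bound from the longest chain -/

theorem length_le_of_pairwise_cyclesDisjoint {v : V} {K : ℕ}
    (hK : ∀ k (C : Fin (k + 1) → List E), IsCycleChain src tgt v C → k ≤ K) {L : List V}
    (hc : ∀ x ∈ L, IsCycleAt src tgt x (cycleAt src tgt x)) (hv : ∀ x ∈ L, Reaches src tgt v x)
    (hL : L.Pairwise fun x y =>
      Reaches src tgt x y ∧ CyclesDisjoint src (cycleAt src tgt x) (cycleAt src tgt y)) :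
    L.length ≤ K + 1 := by
  obtain h | ⟨k, hk⟩ : L.length = 0 ∨ ∃ k, L.length = k + 1 := by
    cases L.length <;> simp
  · omega
  let x : Fin (k + 1) → V := fun i => L[(i : ℕ)]'(by omega)
  have hxL (i) : x i ∈ L := getElem_mem _
  have hpw (i j : Fin (k + 1)) (hij : i < j) :=
    pairwise_iff_getElem.1 hL i j (by omega) (by omega) hij
  suffices IsCycleChain src tgt v fun i => cycleAt src tgt (x i) by have := hK k _ this; omega
  refine ⟨fun i => isSimpleCycle_iff_exists_isCycleAt.2 ⟨_, hc _ (hxL i)⟩, fun i j hij => ?_,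
    ⟨x 0, (hc _ (hxL 0)).mem_map, hv _ (hxL 0)⟩, fun i => ?_⟩
  · rcases lt_or_gt_of_ne hij with h | h
    · exact (hpw i j h).2
    · exact (hpw j i h).2.symm
  · exact ⟨x i.castSucc, (hc _ (hxL _)).mem_map, x i.succ, (hc _ (hxL _)).mem_map,
      (hpw _ _ Fin.castSucc_lt_succ).1⟩

theorem IsCycleSplicing.ncard_support_le {v w : V} (hUC : UniqueCycles src tgt v) {K : ℕ}
    (hK : ∀ k (C : Fin (k + 1) → List E), IsCycleChain src tgt v C → k ≤ K) {l skel : List E}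
    {m : V → ℕ} (hs : IsCycleSplicing src tgt l skel m) (hl : IsWalk src tgt v w l) :
    (Function.support m).ncard ≤ K + 1 := by
  classical
  set L := (skel.map src).filter (m · ≠ 0)
  have hmem (x) : x ∈ L ↔ m x ≠ 0 := by
    simpa [L] using fun h => (hs.support x h).1
  have hv (x) (hx : x ∈ skel.map src) : Reaches src tgt v x :=
    hl.reaches_of_mem (map_subset src (hs.eq ▸ sublist_spliceCycles m skel).subset hx)
  have hsupp : Function.support m = ↑L.toFinset := by ext x; simp [hmem]
  rw [hsupp, Set.ncard_coe_finset, toFinset_card_of_nodup (hs.nodup.filter _)]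
  refine length_le_of_pairwise_cyclesDisjoint hK (fun x hx => (hs.support x ((hmem x).1 hx)).2)
    (fun x hx => hv x (mem_of_mem_filter hx)) ?_
  refine (hs.pairwise.sublist filter_sublist).imp_of_mem fun hx hy h => ⟨h.1, ?_⟩
  exact hUC.cyclesDisjoint (hv _ (mem_of_mem_filter hx)) (hs.support _ ((hmem _).1 hx)).2
    (hs.support _ ((hmem _).1 hy)).2 (h.2 ((hmem _).1 hy))

theorem IsCycleSplicing.le_length {l skel : List E} {m : V → ℕ}
    (hs : IsCycleSplicing src tgt l skel m) (x : V) : m x ≤ l.length := by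
  by_cases hx : m x = 0
  · omega
  have hc := hs.support x hx
  have hlen := (infix_spliceCycles (tgt := tgt) (m := m) hc.1).length_le
  rw [← hs.eq] at hlen
  have := length_pos_iff.2 hc.2.ne_nil
  simp only [length_flatten, map_replicate, sum_replicate_nat] at hlen
  nlinarith

theorem subset_range_of_ncard_support_le {α : Type*} [Finite α] [DecidableEq α] (n k : ℕ) :
    {m : α → ℕ | (∀ x, m x ≤ n) ∧ (Function.support m).ncard ≤ k} ⊆
      Set.range fun p : (Fin k → Option α) × (Fin k → Fin (n + 1)) =>
        fun x => ∑ i, if p.1 i = some x then (p.2 i : ℕ) else 0 := by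
  rintro m ⟨hmn, hmk⟩
  have hfin : (Function.support m).Finite := Set.toFinite _
  set L := hfin.toFinset.toList
  have hL : L.Nodup := Finset.nodup_toList _
  have hmemL (x) : x ∈ L ↔ m x ≠ 0 := by simp [L]
  have hlen : L.length ≤ k := by
    rwa [Finset.length_toList, ← Set.ncard_eq_toFinset_card _ hfin]
  refine ⟨(fun i => L[(i : ℕ)]?, fun i =>
    if h : (i : ℕ) < L.length then ⟨m L[(i : ℕ)], Nat.lt_succ_of_le (hmn _)⟩ else 0),
    funext fun x => ?_⟩
  by_cases hx : m x = 0
  · rw [hx]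
    exact Finset.sum_eq_zero fun i _ => if_neg fun h => (hmemL x).1 (mem_of_getElem? h) hx
  · obtain ⟨j, hj, rfl⟩ := getElem_of_mem ((hmemL _).2 hx)
    dsimp only
    rw [Finset.sum_eq_single (⟨j, by omega⟩ : Fin k)]
    · simp [hj]
    · refine fun i _ hi => if_neg fun h => hi (Fin.ext ?_)
      exact ((getElem?_inj hj hL).1 ((getElem?_eq_getElem hj).trans h.symm)).symm
    · simp

theorem UniqueCycles.isBigO_walkCount [Fintype V] [Finite E] {v : V}
    (hUC : UniqueCycles src tgt v) {K : ℕ}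
    (hK : ∀ k (C : Fin (k + 1) → List E), IsCycleChain src tgt v C → k ≤ K) :
    (fun n => (walkCount src tgt v n : ℝ)) =O[atTop] fun n => (n : ℝ) ^ (K + 1) := by
  classical
  let Skel : Set (List E) := {s | s.length ≤ Fintype.card V}
  let Mult (n : ℕ) : Set (V → ℕ) := {m | (∀ x, m x ≤ n) ∧ (Function.support m).ncard ≤ K + 1}
  have hMult (n) := subset_range_of_ncard_support_le (α := V) n (K + 1)
  have hfin (n) : (Skel ×ˢ Mult n).Finite :=
    (List.finite_length_le E _).prod ((Set.finite_range _).subset (hMult n))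
  have hsub (n) : {l | l.length ≤ n ∧ ∃ w, IsWalk src tgt v w l} ⊆
      (fun p => spliceCycles src tgt p.2 p.1) '' (Skel ×ˢ Mult n) := by
    rintro l ⟨hln, w, hl⟩
    obtain ⟨skel, m, hs⟩ := hUC.exists_isCycleSplicing (Or.inl rfl) hl
    exact ⟨(skel, m), ⟨by simpa [Skel] using hs.nodup.length_le_card,
      fun x => (hs.le_length x).trans hln, hs.ncard_support_le hUC hK hl⟩, hs.eq.symm⟩
  have hMult_card (n) : (Mult n).ncard ≤ Nat.card (Fin (K + 1) → Option V) * (n + 1) ^ (K + 1) := by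
    refine (Set.ncard_le_ncard (hMult n) (Set.finite_range _)).trans ?_
    rw [← Set.image_univ]
    refine (Set.ncard_image_le (Set.toFinite _)).trans ?_
    simp
  have hle (n) : walkCount src tgt v n ≤
      Skel.ncard * Nat.card (Fin (K + 1) → Option V) * (1 + 1 * n) ^ (K + 1) :=
    calc walkCount src tgt v n
        ≤ ((fun p => spliceCycles src tgt p.2 p.1) '' (Skel ×ˢ Mult n)).ncard :=
          Set.ncard_le_ncard (hsub n) ((hfin n).image _)
      _ ≤ Skel.ncard * (Mult n).ncard := Set.ncard_prod ▸ Set.ncard_image_le (hfin n)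
      _ ≤ _ := by
          rw [mul_assoc, one_mul, add_comm 1]
          exact Nat.mul_le_mul_left _ (hMult_card n)
  refine (IsBigO.of_bound (Skel.ncard * Nat.card (Fin (K + 1) → Option V) : ℝ)
    (Eventually.of_forall fun n => ?_)).trans
    ((isBigO_refl (fun n : ℕ => (n : ℝ) ^ (K + 1)) atTop).comp_affine 1 one_pos)
  rw [Real.norm_natCast, norm_pow, Real.norm_natCast]
  exact_mod_cast hle n

end PathGrowth

open PathGrowth Asymptotics

theorem polyPathGrowth_degree_eq_max_cycle_chain_general [Fintype V] [Fintype E]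
    (src tgt : E → V) (v : V) (d : ℕ) (c₁ c₂ : ℝ) (hc₁ : 0 < c₁) (N : ℕ)
    (hgrowth : ∀ n ≥ N, c₁ * (n : ℝ) ^ d ≤ (pathCount src tgt v n : ℝ) ∧
      (pathCount src tgt v n : ℝ) ≤ c₂ * (n : ℝ) ^ d) :
    IsGreatest {k : ℕ | ∃ C : Fin (k + 1) → List E,
      (∀ i, IsSimpleCycle src tgt (C i)) ∧
      (∀ i j, i ≠ j → CyclesDisjoint src (C i) (C j)) ∧
      ReachesCycle src tgt v (C 0) ∧
      (∀ i : Fin k, CycleReachesCycle src tgt (C i.castSucc) (C i.succ))} d := by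
  change IsGreatest {k | ∃ C : Fin (k + 1) → List E, IsCycleChain src tgt v C} d
  have hupper : (fun n => (pathCount src tgt v n : ℝ)) =O[atTop] fun n => (n : ℝ) ^ d :=
    IsBigO.of_bound c₂ <| eventually_atTop.2 ⟨N, fun n hn => by simpa using (hgrowth n hn).2⟩
  have hlower : (fun n : ℕ => (n : ℝ) ^ d) =O[atTop] fun n => (pathCount src tgt v n : ℝ) :=
    IsBigO.of_bound c₁⁻¹ <| eventually_atTop.2 ⟨N, fun n hn => by
      simpa [le_inv_mul_iff₀ hc₁] using (hgrowth n hn).1⟩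
  have hwalk := isBigO_walkCount_of_isBigO_pathCount hupper
  have hle : ∀ k ∈ {k | ∃ C : Fin (k + 1) → List E, IsCycleChain src tgt v C}, k ≤ d :=
    fun k ⟨C, hC⟩ => Nat.le_of_succ_le_succ (hC.succ_le_of_isBigO hwalk)
  have hpos : pathCount src tgt v (N + Fintype.card V + 1) ≠ 0 := by
    have := (hgrowth (N + Fintype.card V + 1) (by omega)).1
    exact Nat.cast_ne_zero.1 (lt_of_lt_of_le (by positivity) this).ne'
  obtain ⟨K, hKS, hK⟩ := BddAbove.exists_isGreatest_of_nonempty ⟨d, hle⟩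
    ⟨0, exists_isCycleChain_of_pathCount_ne_zero (by omega) hpos⟩
  have hdK := succ_le_of_isBigO_walkCount hlower
    ((uniqueCycles_of_isBigO hwalk).isBigO_walkCount fun k C hC => hK ⟨C, hC⟩)
  obtain rfl : K = d := le_antisymm (hle K hKS) (by omega)
  exact ⟨hKS, hK⟩

/-- If the number of length-`n` paths from `v` grows like `n ^ d`, then
`d` is the largest `k` for which there are pairwise vertex-disjoint simple cycles
`C₀, …, C_k` with `v ≥ C₀ ≥ C₁ ≥ ⋯ ≥ C_k`. -/
theorem polyPathGrowth_degree_eq_max_cycle_chain [Fintype V] [Fintype E]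
    (src tgt : E → V) (v : V) (d : ℕ) (c₁ c₂ : ℝ) (hc₁ : 0 < c₁) (hc : c₁ ≤ c₂) (N : ℕ)
    (hgrowth : ∀ n ≥ N, c₁ * (n : ℝ) ^ d ≤ (pathCount src tgt v n : ℝ) ∧
      (pathCount src tgt v n : ℝ) ≤ c₂ * (n : ℝ) ^ d) :
    IsGreatest {k : ℕ | ∃ C : Fin (k + 1) → List E,
      (∀ i, IsSimpleCycle src tgt (C i)) ∧
      (∀ i j, i ≠ j → CyclesDisjoint src (C i) (C j)) ∧
      ReachesCycle src tgt v (C 0) ∧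
      (∀ i : Fin k, CycleReachesCycle src tgt (C i.castSucc) (C i.succ))} d :=
  polyPathGrowth_degree_eq_max_cycle_chain_general src tgt v d c₁ c₂ hc₁ N hgrowth
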